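/- Let N ≥ 1 be an integer and let s ∈ (0,1) with N > 2s, and let σ be a real number with 0 < σ < N − 2s. Then there exists a constant C > 0, depending only on N, s, σ, such that for every y ∈ ℝ^N, ∫_{ℝ^N} |y−z|^{−(N−2s)} (1+|z|)^{−(2s+σ)} dz ≤ C (1+|y|)^{−σ}. -/

import Mathlib

/-!
With `R = 1 + ‖y‖`, `a = N - 2s` and `b = 2s + σ` we have `0 < a, b < N < a + b = N + σ`.
Split `ℝ^N` into three regions: near the singularity (`‖y - z‖ < R/2`) we have `1 + ‖z‖ ≥ R/2`;
in the intermediate region (`‖y - z‖ ≥ R/2`, `‖z‖ < 2R`) the first factor is at most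
`(R/2)^(-a)`; far away (`‖z‖ ≥ 2R`) we have `‖y - z‖ ≥ ‖z‖/2`. On each region the integrand is
thus bounded by a power of `R` times `‖·‖^(-p)` on the ball of radius `R/2` or `2R`, where
`p < N`, or on the complement of the latter, where `p = a + b > N`. By homogeneity such an
integral is `R^(N - p)` times its value at `R = 1`, and all three contributions are constant
multiples of `R^(N - a - b) = R^(-σ)`.
-/

open MeasureTheory Metric Set Module
open scoped Pointwise

theorem div_two_rpow_neg {R : ℝ} (hR : 0 ≤ R) (p : ℝ) : (R / 2) ^ (-p) = 2 ^ p * R ^ (-p) := by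
  rw [Real.div_rpow hR zero_le_two, Real.rpow_neg zero_le_two, div_inv_eq_mul, mul_comm]

section Balls

variable {E : Type*} [NormedAddCommGroup E] [NormedSpace ℝ E]

theorem smul_ball_zero_of_pos {r : ℝ} (hr : 0 < r) (ρ : ℝ) :
    r • ball (0 : E) ρ = ball 0 (r * ρ) := by
  rw [_root_.smul_ball hr.ne', smul_zero, Real.norm_of_nonneg hr.le]

theorem smul_compl_ball_zero_of_pos {r : ℝ} (hr : 0 < r) (ρ : ℝ) :
    r • (ball (0 : E) ρ)ᶜ = (ball 0 (r * ρ))ᶜ := by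
  ext x
  rw [mem_smul_set_iff_inv_smul_mem₀ hr.ne', mem_compl_iff, mem_compl_iff,
    ← smul_ball_zero_of_pos hr, mem_smul_set_iff_inv_smul_mem₀ hr.ne']

end Balls

section PowerIntegrals

variable {E : Type*} [NormedAddCommGroup E] [NormedSpace ℝ E] [FiniteDimensional ℝ E]
  [MeasurableSpace E] [BorelSpace E] {μ : Measure E} [μ.IsAddHaarMeasure]

theorem setIntegral_smul_set_norm_rpow_neg {r : ℝ} (hr : 0 < r) (s : Set E) (p : ℝ) :
    ∫ x in r • s, ‖x‖ ^ (-p) ∂μ = r ^ ((finrank ℝ E : ℝ) - p) * ∫ x in s, ‖x‖ ^ (-p) ∂μ := by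
  have hscale := Measure.setIntegral_comp_smul_of_pos μ (fun x : E => ‖x‖ ^ (-p)) s hr
  simp only [norm_smul, Real.norm_of_nonneg hr.le, Real.mul_rpow hr.le (norm_nonneg _),
    integral_const_mul, smul_eq_mul] at hscale
  rw [Real.rpow_sub hr, Real.rpow_natCast, div_eq_mul_inv, ← Real.rpow_neg hr.le, mul_assoc,
    hscale, ← mul_assoc, mul_inv_cancel₀ (by positivity), one_mul]

theorem setIntegral_ball_norm_rpow_neg {r : ℝ} (hr : 0 < r) (ρ p : ℝ) :
    ∫ x in ball 0 (r * ρ), ‖x‖ ^ (-p) ∂μ =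
      r ^ ((finrank ℝ E : ℝ) - p) * ∫ x in ball (0 : E) ρ, ‖x‖ ^ (-p) ∂μ := by
  rw [← smul_ball_zero_of_pos hr, setIntegral_smul_set_norm_rpow_neg hr]

theorem setIntegral_compl_ball_norm_rpow_neg {r : ℝ} (hr : 0 < r) (ρ p : ℝ) :
    ∫ x in (ball 0 (r * ρ))ᶜ, ‖x‖ ^ (-p) ∂μ =
      r ^ ((finrank ℝ E : ℝ) - p) * ∫ x in (ball (0 : E) ρ)ᶜ, ‖x‖ ^ (-p) ∂μ := by
  rw [← smul_compl_ball_zero_of_pos hr, setIntegral_smul_set_norm_rpow_neg hr]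

theorem integrableOn_ball_norm_rpow_neg [Nontrivial E] {p : ℝ} (hp : p < finrank ℝ E) (r : ℝ) :
    IntegrableOn (fun x : E => ‖x‖ ^ (-p)) (ball 0 r) μ :=
  integrableOn_ball_of_norm_le_rpow finrank_pos hp
    (ae_of_all _ fun x => by rw [one_mul, Real.norm_of_nonneg (by positivity)])
    (by fun_prop : Measurable fun x : E => ‖x‖ ^ (-p)).aestronglyMeasurable

theorem integrableOn_compl_ball_norm_rpow_neg {q : ℝ} (hq : (finrank ℝ E : ℝ) < q) {r : ℝ}
    (hr : 1 ≤ r) : IntegrableOn (fun x : E => ‖x‖ ^ (-q)) (ball 0 r)ᶜ μ := by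
  refine Integrable.mono' ((integrable_one_add_norm hq).const_mul (2 ^ q)).integrableOn
    (by fun_prop : Measurable fun x : E => ‖x‖ ^ (-q)).aestronglyMeasurable.restrict ?_
  filter_upwards [ae_restrict_mem measurableSet_ball.compl] with x hx
  have hx : r ≤ ‖x‖ := by simpa using hx
  rw [Real.norm_of_nonneg (by positivity), ← div_two_rpow_neg (by positivity)]
  exact Real.rpow_le_rpow_of_nonpos (by positivity) (by linarith)
    (by linarith [(Nat.cast_nonneg (finrank ℝ E) : (0 : ℝ) ≤ _)])

end PowerIntegrals

section Pointwise

variable {E : Type*} [SeminormedAddCommGroup E] {a b : ℝ} (y z : E)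

theorem rpow_neg_norm_sub_mul_le_of_near (hb : 0 ≤ b) (h : ‖y - z‖ < (1 + ‖y‖) / 2) :
    ‖y - z‖ ^ (-a) * (1 + ‖z‖) ^ (-b) ≤ 2 ^ b * (1 + ‖y‖) ^ (-b) * ‖y - z‖ ^ (-a) := by
  have hz : (1 + ‖y‖) / 2 ≤ 1 + ‖z‖ := by
    linarith [norm_sub_norm_le y z, norm_sub_rev y z, norm_nonneg y]
  rw [mul_comm, ← div_two_rpow_neg (by positivity)]
  exact mul_le_mul_of_nonneg_right (Real.rpow_le_rpow_of_nonpos (by positivity) hz (by linarith))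
    (by positivity)

theorem rpow_neg_norm_sub_mul_le_of_middle (ha : 0 ≤ a) (hb : 0 ≤ b)
    (h : (1 + ‖y‖) / 2 ≤ ‖y - z‖) (hz : 0 < ‖z‖) :
    ‖y - z‖ ^ (-a) * (1 + ‖z‖) ^ (-b) ≤ 2 ^ a * (1 + ‖y‖) ^ (-a) * ‖z‖ ^ (-b) := by
  rw [← div_two_rpow_neg (by positivity)]
  exact mul_le_mul (Real.rpow_le_rpow_of_nonpos (by positivity) h (by linarith))
    (Real.rpow_le_rpow_of_nonpos hz (by linarith) (by linarith)) (by positivity) (by positivity)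

theorem rpow_neg_norm_sub_mul_le_of_far (ha : 0 ≤ a) (hb : 0 ≤ b)
    (h : 2 * (1 + ‖y‖) ≤ ‖z‖) :
    ‖y - z‖ ^ (-a) * (1 + ‖z‖) ^ (-b) ≤ 2 ^ a * ‖z‖ ^ (-(a + b)) := by
  have hz : 0 < ‖z‖ := by linarith [norm_nonneg y]
  have hyz : ‖z‖ / 2 ≤ ‖y - z‖ := by linarith [norm_sub_norm_le z y, norm_sub_rev y z]
  calc ‖y - z‖ ^ (-a) * (1 + ‖z‖) ^ (-b) ≤ (‖z‖ / 2) ^ (-a) * ‖z‖ ^ (-b) :=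
        mul_le_mul (Real.rpow_le_rpow_of_nonpos (by positivity) hyz (by linarith))
          (Real.rpow_le_rpow_of_nonpos hz (by linarith) (by linarith)) (by positivity)
          (by positivity)
    _ = 2 ^ a * ‖z‖ ^ (-(a + b)) := by
        rw [div_two_rpow_neg hz.le, mul_assoc, ← Real.rpow_add hz, neg_add]

end Pointwise

section Majorant

variable {E : Type*} [NormedAddCommGroup E]

noncomputable def regionMajorant (a b : ℝ) (y z : E) : ℝ :=
  2 ^ b * (1 + ‖y‖) ^ (-b) * (ball 0 ((1 + ‖y‖) / 2)).indicator (‖·‖ ^ (-a)) (y - z) +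
    2 ^ a * (1 + ‖y‖) ^ (-a) * (ball 0 (2 * (1 + ‖y‖))).indicator (‖·‖ ^ (-b)) z +
    2 ^ a * (ball 0 (2 * (1 + ‖y‖)))ᶜ.indicator (‖·‖ ^ (-(a + b))) z

theorem rpow_neg_norm_sub_mul_le_regionMajorant {a b : ℝ} (ha : 0 ≤ a) (hb : 0 ≤ b) (y : E)
    {z : E} (hz : z ≠ 0) :
    ‖y - z‖ ^ (-a) * (1 + ‖z‖) ^ (-b) ≤ regionMajorant a b y z := by
  have h_nonneg : ∀ (s : Set E) (p : ℝ) (w : E), 0 ≤ s.indicator (‖·‖ ^ (-p)) w :=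
    fun s p w => indicator_nonneg (fun w _ => by positivity) w
  have h₁ := mul_nonneg (by positivity : (0 : ℝ) ≤ 2 ^ b * (1 + ‖y‖) ^ (-b))
    (h_nonneg (ball 0 ((1 + ‖y‖) / 2)) a (y - z))
  have h₂ := mul_nonneg (by positivity : (0 : ℝ) ≤ 2 ^ a * (1 + ‖y‖) ^ (-a))
    (h_nonneg (ball 0 (2 * (1 + ‖y‖))) b z)
  have h₃ := mul_nonneg (by positivity : (0 : ℝ) ≤ 2 ^ a)
    (h_nonneg (ball 0 (2 * (1 + ‖y‖)))ᶜ (a + b) z)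
  unfold regionMajorant
  by_cases hnear : ‖y - z‖ < (1 + ‖y‖) / 2
  · rw [indicator_of_mem (mem_ball_zero_iff.2 hnear)]
    linarith [rpow_neg_norm_sub_mul_le_of_near (a := a) y z hb hnear]
  by_cases hmid : ‖z‖ < 2 * (1 + ‖y‖)
  · rw [indicator_of_mem (mem_ball_zero_iff.2 hmid)]
    linarith [rpow_neg_norm_sub_mul_le_of_middle y z ha hb (not_lt.1 hnear) (norm_pos_iff.2 hz)]
  · rw [indicator_of_mem (mem_compl (mt mem_ball_zero_iff.1 hmid))]
    linarith [rpow_neg_norm_sub_mul_le_of_far y z ha hb (not_lt.1 hmid)]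

end Majorant

section Estimate

variable {E : Type*} [NormedAddCommGroup E] [NormedSpace ℝ E] [FiniteDimensional ℝ E]
  [MeasurableSpace E] [BorelSpace E] {μ : Measure E} [μ.IsAddHaarMeasure] [Nontrivial E]
  {a b : ℝ}

theorem integrable_regionMajorant_and_integral_eq (had : a < finrank ℝ E)
    (hbd : b < finrank ℝ E) (habd : finrank ℝ E < a + b) (y : E) :
    Integrable (regionMajorant a b y) μ ∧
      ∫ z, regionMajorant a b y z ∂μ =
        (2 ^ b * ∫ x in ball (0 : E) 2⁻¹, ‖x‖ ^ (-a) ∂μ +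
          2 ^ a * ∫ x in ball (0 : E) 2, ‖x‖ ^ (-b) ∂μ +
          2 ^ a * ∫ x in (ball (0 : E) 2)ᶜ, ‖x‖ ^ (-(a + b)) ∂μ) *
        (1 + ‖y‖) ^ ((finrank ℝ E : ℝ) - (a + b)) := by
  set R := 1 + ‖y‖
  have hR : 0 < R := by positivity
  have hg₁ := ((integrable_indicator_iff (μ := μ) measurableSet_ball).2
    (integrableOn_ball_norm_rpow_neg had (R / 2))).comp_sub_left y
    |>.const_mul (2 ^ b * R ^ (-b))
  have hg₂ := ((integrable_indicator_iff (μ := μ) measurableSet_ball).2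
    (integrableOn_ball_norm_rpow_neg hbd (2 * R))).const_mul (2 ^ a * R ^ (-a))
  have hg₃ := ((integrable_indicator_iff (μ := μ) measurableSet_ball.compl).2
    (integrableOn_compl_ball_norm_rpow_neg habd (r := 2 * R)
      (by linarith [norm_nonneg y]))).const_mul (2 ^ a)
  refine ⟨(hg₁.add hg₂).add hg₃, ?_⟩
  unfold regionMajorant
  rw [integral_add _ hg₃, integral_add hg₁ hg₂, integral_const_mul, integral_const_mul,
    integral_const_mul, integral_sub_left_eq_self, integral_indicator measurableSet_ball,
    integral_indicator measurableSet_ball, integral_indicator measurableSet_ball.compl,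
    div_eq_mul_inv, mul_comm 2 R, setIntegral_ball_norm_rpow_neg hR,
    setIntegral_ball_norm_rpow_neg hR, setIntegral_compl_ball_norm_rpow_neg hR]
  · have e₁ : R ^ (-b) * R ^ ((finrank ℝ E : ℝ) - a) = R ^ ((finrank ℝ E : ℝ) - (a + b)) := by
      rw [← Real.rpow_add hR]; ring_nf
    have e₂ : R ^ (-a) * R ^ ((finrank ℝ E : ℝ) - b) = R ^ ((finrank ℝ E : ℝ) - (a + b)) := by
      rw [← Real.rpow_add hR]; ring_nf
    linear_combination (2 ^ b * ∫ x in ball (0 : E) 2⁻¹, ‖x‖ ^ (-a) ∂μ) * e₁ +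
      (2 ^ a * ∫ x in ball (0 : E) 2, ‖x‖ ^ (-b) ∂μ) * e₂
  · exact hg₁.add hg₂

end Estimate

theorem exists_integral_rpow_neg_norm_sub_mul_le {E : Type*} [NormedAddCommGroup E]
    [NormedSpace ℝ E] [FiniteDimensional ℝ E] [MeasurableSpace E] [BorelSpace E]
    (μ : Measure E) [μ.IsAddHaarMeasure] {a b : ℝ} (ha : 0 ≤ a) (had : a < finrank ℝ E)
    (hb : 0 ≤ b) (hbd : b < finrank ℝ E) (habd : finrank ℝ E < a + b) :
    ∃ C, ∀ y : E, ∫ z, ‖y - z‖ ^ (-a) * (1 + ‖z‖) ^ (-b) ∂μ ≤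
      C * (1 + ‖y‖) ^ ((finrank ℝ E : ℝ) - (a + b)) := by
  have : Nontrivial E :=
    Module.nontrivial_of_finrank_pos (R := ℝ) (by exact_mod_cast ha.trans_lt had)
  have hle (y : E) :
      ∀ᵐ z ∂μ, ‖y - z‖ ^ (-a) * (1 + ‖z‖) ^ (-b) ≤ regionMajorant a b y z := by
    filter_upwards [compl_mem_ae_iff.2 (measure_singleton (0 : E))] with z hz
    exact rpow_neg_norm_sub_mul_le_regionMajorant ha hb y hz
  have hmaj (y : E) := integrable_regionMajorant_and_integral_eq (μ := μ) had hbd habd y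
  exact ⟨_, fun y => (integral_mono_of_nonneg (ae_of_all _ fun z => by positivity)
    (hmaj y).1 (hle y)).trans_eq (hmaj y).2⟩

theorem stmt_1 (N : ℕ) (s σ : ℝ) (hs : s ∈ Set.Ioo (0 : ℝ) 1)
    (hσ0 : 0 < σ) (hσ : σ < N - 2 * s) :
    ∃ C > 0, ∀ y : EuclideanSpace ℝ (Fin N),
      (∫ z : EuclideanSpace ℝ (Fin N),
          ‖y - z‖ ^ (-((N : ℝ) - 2 * s)) * (1 + ‖z‖) ^ (-(2 * s + σ))) ≤
        C * (1 + ‖y‖) ^ (-σ) := by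
  have hd : (finrank ℝ (EuclideanSpace ℝ (Fin N)) : ℝ) = N := by rw [finrank_euclideanSpace_fin]
  obtain ⟨C, hC⟩ := exists_integral_rpow_neg_norm_sub_mul_le volume
    (a := N - 2 * s) (b := 2 * s + σ) (by linarith) (by rw [hd]; linarith [hs.1])
    (by linarith [hs.1]) (by rw [hd]; linarith) (by rw [hd]; linarith)
  refine ⟨max C 1, by positivity, fun y => (hC y).trans ?_⟩
  rw [hd, show (N : ℝ) - (N - 2 * s + (2 * s + σ)) = -σ by ring]
  gcongr
  exact le_max_left C 1
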